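/- arXiv:1611.06075 — 4 statements merged into one kernel-verified Lean document; each statement's English description precedes it below -/
import Mathlib

section
/- Let E^μ_ν be a differentiable mixed tensor field on ℝⁿ whose raised components E^{μν} = E^μ_α g^{αν} form a symmetric matrix at every point. Then for every value of the parameter b, at every point and for every ν one has E^μ_{ν∥⁻μ} = E^μ_{ν;μ}. -/
open scoped BigOperators

noncomputable section

/-- A point of ℝⁿ. -/
abbrev Pt (n : ℕ) := Fin n → ℝ
/-- A field of doubly-indexed components, e.g. a metric `g x μ ν` or a mixed tensor `E x μ ν`. -/
abbrev Tensor2 (n : ℕ) := Pt n → Fin n → Fin n → ℝ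
/-- A field of connection coefficients `N x α μ ν = N^α_{μν}`. -/
abbrev Conn (n : ℕ) := Pt n → Fin n → Fin n → Fin n → ℝ

/-- Partial derivative `∂_μ f` at `x`. -/
noncomputable def pd {n : ℕ} (f : Pt n → ℝ) (μ : Fin n) (x : Pt n) : ℝ :=
  fderiv ℝ f x (Pi.single μ 1)

/-- Christoffel symbols `{^α_{μν}} = (1/2) g^{ασ}(∂_ν g_{μσ} + ∂_μ g_{νσ} − ∂_σ g_{μν})`. -/
noncomputable def christoffel {n : ℕ} (g ginv : Tensor2 n) : Conn n := fun x α μ ν =>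
  (1/2) * ∑ σ, ginv x α σ *
    (pd (fun y => g y μ σ) ν x + pd (fun y => g y ν σ) μ x - pd (fun y => g y μ ν) σ x)

/-- Contracted covariant derivative of `E` with respect to the dual (transposed) connection of `N`:
`E^μ_{ν∘μ} = ∂_μ E^μ_ν − E^μ_α N^α_{μν} + E^α_ν N^μ_{μα}` (summed over `μ` and `α`). -/
noncomputable def covDivDual {n : ℕ} (N : Conn n) (E : Tensor2 n) (ν : Fin n) (x : Pt n) : ℝ :=
  (∑ μ, pd (fun y => E y μ ν) μ x)
    - (∑ μ, ∑ α, E x μ α * N x α μ ν)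
    + (∑ μ, ∑ α, E x α ν * N x μ μ α)

/-- if the raised components `E^{μν} = E^μ_α g^{αν}` are symmetric, then for
every `b` one has `E^μ_{ν∥⁻μ} = E^μ_{ν;μ}`. -/
theorem stmt2 {n : ℕ} (hn : 1 ≤ n)
    (g ginv : Tensor2 n)
    (hg_diff : ∀ μ ν, ContDiff ℝ 1 (fun x => g x μ ν))
    (hg_symm : ∀ x μ ν, g x μ ν = g x ν μ)
    (hg_inv : ∀ x μ ν, (∑ α, g x μ α * ginv x α ν) = if μ = ν then (1:ℝ) else 0)
    (hg_inv' : ∀ x μ ν, (∑ α, ginv x μ α * g x α ν) = if μ = ν then (1:ℝ) else 0)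
    (γ : Conn n)
    (hγ_cont : ∀ α μ ν, Continuous (fun x => γ x α μ ν))
    (hγ_anti : ∀ x μ ν σ, (∑ α, g x μ α * γ x α ν σ) = -(∑ α, g x ν α * γ x α μ σ))
    (b : ℝ)
    (E : Tensor2 n)
    (hE_diff : ∀ μ ν, Differentiable ℝ (fun x => E x μ ν))
    (hE_symm : ∀ x μ ν, (∑ α, E x μ α * ginv x α ν) = ∑ α, E x ν α * ginv x α μ) :
    ∀ (x : Pt n) (ν : Fin n),
      covDivDual (fun x α μ ν => christoffel g ginv x α μ ν + b * γ x α μ ν) E ν x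
        = covDivDual (christoffel g ginv) E ν x := by

  intro x ν
  -- transposed inverse identity
  have hδ : ∀ α β : Fin n, (∑ μ, ginv x μ α * g x μ β) = if α = β then (1:ℝ) else 0 := by
    intro α β
    calc (∑ μ, ginv x μ α * g x μ β) = ∑ μ, g x β μ * ginv x μ α := by
          refine Finset.sum_congr rfl fun μ _ => ?_
          rw [hg_symm x μ β]; ring
      _ = if β = α then (1:ℝ) else 0 := hg_inv x β α
      _ = if α = β then (1:ℝ) else 0 := by simp [eq_comm]
  -- ginv is symmetric
  have hginv_symm : ∀ μ σ : Fin n, ginv x μ σ = ginv x σ μ := by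
    intro μ σ
    have h1 : (∑ α, ∑ β, ginv x α μ * (g x α β * ginv x β σ)) = ginv x σ μ := by
      have h : ∀ α, (∑ β, ginv x α μ * (g x α β * ginv x β σ))
          = ginv x α μ * (if α = σ then (1:ℝ) else 0) := by
        intro α
        rw [← Finset.mul_sum, hg_inv x α σ]
      rw [Finset.sum_congr rfl fun α _ => h α]
      simp
    have h2 : (∑ α, ∑ β, ginv x α μ * (g x α β * ginv x β σ)) = ginv x μ σ := by
      rw [Finset.sum_comm]
      have h : ∀ β, (∑ α, ginv x α μ * (g x α β * ginv x β σ))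
          = (if μ = β then (1:ℝ) else 0) * ginv x β σ := by
        intro β
        rw [← hδ μ β, Finset.sum_mul]
        exact Finset.sum_congr rfl fun α _ => by ring
      rw [Finset.sum_congr rfl fun β _ => h β]
      simp
    rw [← h1, h2]
  -- the raised tensor E^{μβ}
  set F : Fin n → Fin n → ℝ := fun μ β => ∑ ρ, E x μ ρ * ginv x ρ β with hF
  have hF_symm : ∀ μ β, F μ β = F β μ := fun μ β => hE_symm x μ β
  have hlow : ∀ μ α, (∑ β, F μ β * g x β α) = E x μ α := by
    intro μ α
    calc (∑ β, F μ β * g x β α)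
        = ∑ β, ∑ ρ, E x μ ρ * (ginv x ρ β * g x β α) := by
          refine Finset.sum_congr rfl fun β _ => ?_
          rw [hF, Finset.sum_mul]
          exact Finset.sum_congr rfl fun ρ _ => by ring
      _ = ∑ ρ, E x μ ρ * (∑ β, ginv x ρ β * g x β α) := by
          rw [Finset.sum_comm]
          exact Finset.sum_congr rfl fun ρ _ => (Finset.mul_sum _ _ _).symm
      _ = E x μ α := by simp [hg_inv']
  have hcontr : ∀ β α, (∑ μ, F μ β * g x μ α) = E x β α := by
    intro β α
    rw [Finset.sum_congr rfl fun μ _ => by rw [hF_symm μ β]]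
    exact hlow β α
  -- first extra term vanishes
  have hT1 : (∑ μ, ∑ α, E x μ α * γ x α μ ν) = 0 := by
    have step1 : ∀ μ, (∑ α, E x μ α * γ x α μ ν)
        = ∑ β, F μ β * (∑ α, g x β α * γ x α μ ν) := by
      intro μ
      calc (∑ α, E x μ α * γ x α μ ν)
          = ∑ α, (∑ β, F μ β * g x β α) * γ x α μ ν := by
            refine Finset.sum_congr rfl fun α _ => ?_
            rw [hlow]
        _ = ∑ α, ∑ β, F μ β * (g x β α * γ x α μ ν) := by
            refine Finset.sum_congr rfl fun α _ => ?_
            rw [Finset.sum_mul]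
            exact Finset.sum_congr rfl fun β _ => by ring
        _ = ∑ β, ∑ α, F μ β * (g x β α * γ x α μ ν) := Finset.sum_comm
        _ = ∑ β, F μ β * (∑ α, g x β α * γ x α μ ν) := by
            exact Finset.sum_congr rfl fun β _ => (Finset.mul_sum _ _ _).symm
    have step3 : ∀ β, (∑ μ, F μ β * (∑ α, g x μ α * γ x α β ν))
        = ∑ α, E x β α * γ x α β ν := by
      intro β
      calc (∑ μ, F μ β * (∑ α, g x μ α * γ x α β ν))
          = ∑ μ, ∑ α, F μ β * g x μ α * γ x α β ν := by
            refine Finset.sum_congr rfl fun μ _ => ?_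
            rw [Finset.mul_sum]
            exact Finset.sum_congr rfl fun α _ => by ring
        _ = ∑ α, ∑ μ, F μ β * g x μ α * γ x α β ν := Finset.sum_comm
        _ = ∑ α, (∑ μ, F μ β * g x μ α) * γ x α β ν := by
            exact Finset.sum_congr rfl fun α _ => (Finset.sum_mul _ _ _).symm
        _ = ∑ α, E x β α * γ x α β ν := by
            refine Finset.sum_congr rfl fun α _ => ?_
            rw [hcontr]
    have key : (∑ μ, ∑ α, E x μ α * γ x α μ ν) = -(∑ μ, ∑ α, E x μ α * γ x α μ ν) := by
      calc (∑ μ, ∑ α, E x μ α * γ x α μ ν)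
          = ∑ μ, ∑ β, F μ β * (∑ α, g x β α * γ x α μ ν) :=
            Finset.sum_congr rfl fun μ _ => step1 μ
        _ = ∑ μ, ∑ β, F μ β * -(∑ α, g x μ α * γ x α β ν) := by
            refine Finset.sum_congr rfl fun μ _ => Finset.sum_congr rfl fun β _ => ?_
            rw [hγ_anti x β μ ν]
        _ = -(∑ μ, ∑ β, F μ β * (∑ α, g x μ α * γ x α β ν)) := by
            simp [mul_neg]
        _ = -(∑ β, ∑ μ, F μ β * (∑ α, g x μ α * γ x α β ν)) := by rw [Finset.sum_comm]
        _ = -(∑ β, ∑ α, E x β α * γ x α β ν) := by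
            rw [Finset.sum_congr rfl fun β _ => step3 β]
        _ = -(∑ μ, ∑ α, E x μ α * γ x α μ ν) := rfl
    linarith
  -- trace of γ vanishes
  have htr : ∀ τ, (∑ μ, γ x μ μ τ) = 0 := by
    intro τ
    have hraise : ∀ μ σ, γ x μ σ τ = ∑ β, ginv x μ β * (∑ ρ, g x β ρ * γ x ρ σ τ) := by
      intro μ σ
      calc γ x μ σ τ = ∑ ρ, (if μ = ρ then (1:ℝ) else 0) * γ x ρ σ τ := by simp
        _ = ∑ ρ, (∑ β, ginv x μ β * g x β ρ) * γ x ρ σ τ := by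
            refine Finset.sum_congr rfl fun ρ _ => ?_
            rw [hg_inv']
        _ = ∑ ρ, ∑ β, ginv x μ β * (g x β ρ * γ x ρ σ τ) := by
            refine Finset.sum_congr rfl fun ρ _ => ?_
            rw [Finset.sum_mul]
            exact Finset.sum_congr rfl fun β _ => by ring
        _ = ∑ β, ∑ ρ, ginv x μ β * (g x β ρ * γ x ρ σ τ) := Finset.sum_comm
        _ = ∑ β, ginv x μ β * (∑ ρ, g x β ρ * γ x ρ σ τ) := by
            exact Finset.sum_congr rfl fun β _ => (Finset.mul_sum _ _ _).symm
    have key : (∑ μ, γ x μ μ τ) = -(∑ μ, γ x μ μ τ) := by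
      calc (∑ μ, γ x μ μ τ)
          = ∑ μ, ∑ β, ginv x μ β * (∑ ρ, g x β ρ * γ x ρ μ τ) :=
            Finset.sum_congr rfl fun μ _ => hraise μ μ
        _ = ∑ μ, ∑ β, ginv x μ β * -(∑ ρ, g x μ ρ * γ x ρ β τ) := by
            refine Finset.sum_congr rfl fun μ _ => Finset.sum_congr rfl fun β _ => ?_
            rw [hγ_anti x β μ τ]
        _ = -(∑ μ, ∑ β, ginv x μ β * (∑ ρ, g x μ ρ * γ x ρ β τ)) := by
            simp [mul_neg]
        _ = -(∑ β, ∑ μ, ginv x μ β * (∑ ρ, g x μ ρ * γ x ρ β τ)) := by rw [Finset.sum_comm]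
        _ = -(∑ μ, ∑ β, ginv x μ β * (∑ ρ, g x β ρ * γ x ρ μ τ)) := by
            refine congrArg Neg.neg (Finset.sum_congr rfl fun μ _ =>
              Finset.sum_congr rfl fun β _ => ?_)
            rw [hginv_symm β μ]
        _ = -(∑ μ, γ x μ μ τ) := by
            exact congrArg Neg.neg (Finset.sum_congr rfl fun μ _ => (hraise μ μ).symm)
    linarith
  -- second extra term vanishes
  have hT2 : (∑ μ, ∑ α, E x α ν * γ x μ μ α) = 0 := by
    rw [Finset.sum_comm]
    refine Finset.sum_eq_zero fun α _ => ?_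
    rw [← Finset.mul_sum, htr, mul_zero]
  -- conclude
  simp only [covDivDual]
  have e1 : (∑ μ, ∑ α, E x μ α * (christoffel g ginv x α μ ν + b * γ x α μ ν))
      = (∑ μ, ∑ α, E x μ α * christoffel g ginv x α μ ν)
        + b * (∑ μ, ∑ α, E x μ α * γ x α μ ν) := by
    rw [Finset.mul_sum, ← Finset.sum_add_distrib]
    refine Finset.sum_congr rfl fun μ _ => ?_
    rw [Finset.mul_sum, ← Finset.sum_add_distrib]
    exact Finset.sum_congr rfl fun α _ => by ring
  have e2 : (∑ μ, ∑ α, E x α ν * (christoffel g ginv x μ μ α + b * γ x μ μ α))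
      = (∑ μ, ∑ α, E x α ν * christoffel g ginv x μ μ α)
        + b * (∑ μ, ∑ α, E x α ν * γ x μ μ α) := by
    rw [Finset.mul_sum, ← Finset.sum_add_distrib]
    refine Finset.sum_congr rfl fun μ _ => ?_
    rw [Finset.mul_sum, ← Finset.sum_add_distrib]
    exact Finset.sum_congr rfl fun α _ => by ring
  rw [e1, e2, hT1, hT2]
  ring
end
end

section
/- Let E^μ_ν be a differentiable mixed tensor field on ℝⁿ whose raised components E^{μν} = E^μ_α g^{αν} form a symmetric matrix at every point. Then for every value of the parameter b, the three contracted covariant derivatives coincide at every point: E^μ_{ν∥⁻μ} = E^μ_{ν|⁻μ} = E^μ_{ν;μ}. -/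
open scoped BigOperators

noncomputable section

lemma sum_symm_antisymm {n : ℕ} (S T : Fin n → Fin n → ℝ)
    (hS : ∀ i j, S i j = S j i) (hT : ∀ i j, T i j = -T j i) :
    ∑ i, ∑ j, S i j * T i j = 0 := by
  have h : (∑ i, ∑ j, S i j * T i j) = ∑ i, ∑ j, -(S i j * T i j) := by
    rw [Finset.sum_comm]
    refine Finset.sum_congr rfl fun i _ => Finset.sum_congr rfl fun j _ => ?_
    rw [hS i j, hT j i]; ring
  have h2 : (∑ i, ∑ j, -(S i j * T i j)) = -(∑ i, ∑ j, S i j * T i j) := by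
    simp
  linarith [h, h2]

/-- if the raised components are symmetric, the three contracted covariant
derivatives coincide: `E^μ_{ν∥⁻μ} = E^μ_{ν|⁻μ} = E^μ_{ν;μ}`. -/
theorem stmt5 {n : ℕ} (hn : 1 ≤ n)
    (g ginv : Tensor2 n)
    (hg_diff : ∀ μ ν, ContDiff ℝ 1 (fun x => g x μ ν))
    (hg_symm : ∀ x μ ν, g x μ ν = g x ν μ)
    (hg_inv : ∀ x μ ν, (∑ α, g x μ α * ginv x α ν) = if μ = ν then (1:ℝ) else 0)
    (hg_inv' : ∀ x μ ν, (∑ α, ginv x μ α * g x α ν) = if μ = ν then (1:ℝ) else 0)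
    (γ : Conn n)
    (hγ_cont : ∀ α μ ν, Continuous (fun x => γ x α μ ν))
    (hγ_anti : ∀ x μ ν σ, (∑ α, g x μ α * γ x α ν σ) = -(∑ α, g x ν α * γ x α μ σ))
    (b : ℝ)
    (E : Tensor2 n)
    (hE_diff : ∀ μ ν, Differentiable ℝ (fun x => E x μ ν))
    (hE_symm : ∀ x μ ν, (∑ α, E x μ α * ginv x α ν) = ∑ α, E x ν α * ginv x α μ) :
    ∀ (x : Pt n) (ν : Fin n),
      covDivDual (fun x α μ ν => christoffel g ginv x α μ ν + b * γ x α μ ν) E ν x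
        = covDivDual (fun x α μ ν => christoffel g ginv x α μ ν + γ x α μ ν) E ν x
      ∧ covDivDual (fun x α μ ν => christoffel g ginv x α μ ν + γ x α μ ν) E ν x
        = covDivDual (christoffel g ginv) E ν x := by

  intro x ν
  -- ginv is symmetric
  have hginv_symm : ∀ μ ν', ginv x μ ν' = ginv x ν' μ := by
    intro μ ν'
    have h1 : ginv x μ ν' = ∑ β, (if β = μ then (1:ℝ) else 0) * ginv x β ν' := by
      simp
    rw [h1]
    have h2 : ∀ β, (if β = μ then (1:ℝ) else 0) = ∑ α, g x β α * ginv x α μ := fun β =>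
      (hg_inv x β μ).symm
    calc ∑ β, (if β = μ then (1:ℝ) else 0) * ginv x β ν'
        = ∑ β, (∑ α, g x β α * ginv x α μ) * ginv x β ν' := by
          refine Finset.sum_congr rfl fun β _ => ?_; rw [h2]
      _ = ∑ β, ∑ α, ginv x α μ * (g x α β * ginv x β ν') := by
          refine Finset.sum_congr rfl fun β _ => ?_
          rw [Finset.sum_mul]
          refine Finset.sum_congr rfl fun α _ => ?_
          rw [hg_symm x β α]; ring
      _ = ∑ α, ginv x α μ * ∑ β, g x α β * ginv x β ν' := by
          rw [Finset.sum_comm]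
          exact Finset.sum_congr rfl fun α _ => (Finset.mul_sum _ _ _).symm
      _ = ∑ α, ginv x α μ * (if α = ν' then 1 else 0) := by
          refine Finset.sum_congr rfl fun α _ => ?_; rw [hg_inv x α ν']
      _ = ginv x ν' μ := by simp
  -- the first γ-correction term vanishes
  have keyA : (∑ μ, ∑ α, E x μ α * γ x α μ ν) = 0 := by
    have hrepr : ∀ μ α, E x μ α = ∑ β, (∑ δ, E x μ δ * ginv x δ β) * g x β α := by
      intro μ α
      calc E x μ α = ∑ δ, E x μ δ * (if δ = α then 1 else 0) := by simp
        _ = ∑ δ, E x μ δ * ∑ β, ginv x δ β * g x β α := by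
            refine Finset.sum_congr rfl fun δ _ => ?_; rw [hg_inv' x δ α]
        _ = ∑ δ, ∑ β, (E x μ δ * ginv x δ β) * g x β α := by
            refine Finset.sum_congr rfl fun δ _ => ?_
            rw [Finset.mul_sum]
            exact Finset.sum_congr rfl fun β _ => by ring
        _ = ∑ β, (∑ δ, E x μ δ * ginv x δ β) * g x β α := by
            rw [Finset.sum_comm]
            exact Finset.sum_congr rfl fun β _ => (Finset.sum_mul _ _ _).symm
    calc ∑ μ, ∑ α, E x μ α * γ x α μ ν
        = ∑ μ, ∑ α, (∑ β, (∑ δ, E x μ δ * ginv x δ β) * g x β α) * γ x α μ ν := by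
          refine Finset.sum_congr rfl fun μ _ => Finset.sum_congr rfl fun α _ => ?_
          rw [← hrepr]
      _ = ∑ μ, ∑ β, (∑ δ, E x μ δ * ginv x δ β) * ∑ α, g x β α * γ x α μ ν := by
          refine Finset.sum_congr rfl fun μ _ => ?_
          calc ∑ α, (∑ β, (∑ δ, E x μ δ * ginv x δ β) * g x β α) * γ x α μ ν
              = ∑ α, ∑ β, (∑ δ, E x μ δ * ginv x δ β) * (g x β α * γ x α μ ν) := by
                refine Finset.sum_congr rfl fun α _ => ?_
                rw [Finset.sum_mul]
                exact Finset.sum_congr rfl fun β _ => by ring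
            _ = ∑ β, ∑ α, (∑ δ, E x μ δ * ginv x δ β) * (g x β α * γ x α μ ν) :=
                Finset.sum_comm
            _ = ∑ β, (∑ δ, E x μ δ * ginv x δ β) * ∑ α, g x β α * γ x α μ ν := by
                refine Finset.sum_congr rfl fun β _ => ?_
                rw [Finset.mul_sum]
      _ = 0 := by
          refine sum_symm_antisymm (fun μ β => ∑ δ, E x μ δ * ginv x δ β)
            (fun μ β => ∑ α, g x β α * γ x α μ ν) (fun i j => hE_symm x i j)
            (fun i j => ?_)
          show (∑ α, g x j α * γ x α i ν) = -(∑ α, g x i α * γ x α j ν)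
          exact hγ_anti x j i ν
  -- the second γ-correction term vanishes
  have trace0 : ∀ σ, (∑ μ, γ x μ μ σ) = 0 := by
    intro σ
    have hrepr : ∀ μ, γ x μ μ σ = ∑ δ, ginv x μ δ * ∑ β, g x δ β * γ x β μ σ := by
      intro μ
      symm
      calc ∑ δ, ginv x μ δ * ∑ β, g x δ β * γ x β μ σ
          = ∑ δ, ∑ β, (ginv x μ δ * g x δ β) * γ x β μ σ := by
            refine Finset.sum_congr rfl fun δ _ => ?_
            rw [Finset.mul_sum]
            exact Finset.sum_congr rfl fun β _ => by ring
        _ = ∑ β, (∑ δ, ginv x μ δ * g x δ β) * γ x β μ σ := by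
            rw [Finset.sum_comm]
            exact Finset.sum_congr rfl fun β _ => (Finset.sum_mul _ _ _).symm
        _ = ∑ β, (if μ = β then (1:ℝ) else 0) * γ x β μ σ := by
            refine Finset.sum_congr rfl fun β _ => ?_; rw [hg_inv' x μ β]
        _ = γ x μ μ σ := by simp
    calc ∑ μ, γ x μ μ σ
        = ∑ μ, ∑ δ, ginv x μ δ * ∑ β, g x δ β * γ x β μ σ := by
          exact Finset.sum_congr rfl fun μ _ => hrepr μ
      _ = 0 := by
          refine sum_symm_antisymm (fun μ δ => ginv x μ δ)
            (fun μ δ => ∑ β, g x δ β * γ x β μ σ) hginv_symm (fun i j => ?_)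
          show (∑ β, g x j β * γ x β i σ) = -(∑ β, g x i β * γ x β j σ)
          exact hγ_anti x j i σ
  have keyB : (∑ μ, ∑ α, E x α ν * γ x μ μ α) = 0 := by
    rw [Finset.sum_comm]
    refine Finset.sum_eq_zero fun α _ => ?_
    rw [← Finset.mul_sum, trace0 α, mul_zero]
  -- main computation: both corrected divergences equal the Christoffel one
  have key : ∀ c : ℝ,
      covDivDual (fun x α μ ν => christoffel g ginv x α μ ν + c * γ x α μ ν) E ν x
        = covDivDual (christoffel g ginv) E ν x := by
    intro c
    have hA : (∑ μ, ∑ α, E x μ α *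
        (christoffel g ginv x α μ ν + c * γ x α μ ν))
        = (∑ μ, ∑ α, E x μ α * christoffel g ginv x α μ ν)
          + c * (∑ μ, ∑ α, E x μ α * γ x α μ ν) := by
      rw [Finset.mul_sum, ← Finset.sum_add_distrib]
      refine Finset.sum_congr rfl fun μ _ => ?_
      rw [Finset.mul_sum, ← Finset.sum_add_distrib]
      exact Finset.sum_congr rfl fun α _ => by ring
    have hB : (∑ μ, ∑ α, E x α ν *
        (christoffel g ginv x μ μ α + c * γ x μ μ α))
        = (∑ μ, ∑ α, E x α ν * christoffel g ginv x μ μ α)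
          + c * (∑ μ, ∑ α, E x α ν * γ x μ μ α) := by
      rw [Finset.mul_sum, ← Finset.sum_add_distrib]
      refine Finset.sum_congr rfl fun μ _ => ?_
      rw [Finset.mul_sum, ← Finset.sum_add_distrib]
      exact Finset.sum_congr rfl fun α _ => by ring
    unfold covDivDual
    rw [hA, hB, keyA, keyB]
    ring
  have h1 := key 1
  simp only [one_mul] at h1
  exact ⟨(key b).trans h1.symm, h1⟩
end
end

section
/- Let E^μ_ν be a differentiable mixed tensor field on ℝⁿ whose raised components E^{μν} = E^μ_α g^{αν} form a symmetric matrix at every point, and suppose that E^μ_{ν;μ} = 0 at every point and for every ν. Then for every value of the parameter b one also has E^μ_{ν|⁻μ} = 0 and E^μ_{ν∥⁻μ} = 0 at every point and for every ν. -/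
open scoped BigOperators

noncomputable section

/-- A symmetric matrix paired against an antisymmetric one sums to zero. -/
lemma sum_symm_antisymm_s6 {n : ℕ} (A B : Fin n → Fin n → ℝ)
    (hA : ∀ i j, A i j = A j i) (hB : ∀ i j, B i j = -B j i) :
    ∑ i, ∑ j, A i j * B j i = 0 := by
  have h : (∑ i, ∑ j, A i j * B j i) = -(∑ i, ∑ j, A i j * B j i) := by
    calc ∑ i, ∑ j, A i j * B j i = ∑ j, ∑ i, A i j * B j i := Finset.sum_comm
      _ = ∑ j, ∑ i, -(A j i * B i j) := by
          refine Finset.sum_congr rfl fun j _ => Finset.sum_congr rfl fun i _ => ?_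
          rw [hA i j, hB j i]; ring
      _ = -(∑ j, ∑ i, A j i * B i j) := by
          simp [Finset.sum_neg_distrib]
  linarith

/-- if the raised components are symmetric and `E^μ_{ν;μ} = 0` everywhere, then
for every `b` also `E^μ_{ν|⁻μ} = 0` and `E^μ_{ν∥⁻μ} = 0` everywhere. -/
theorem stmt6 {n : ℕ} (hn : 1 ≤ n)
    (g ginv : Tensor2 n)
    (hg_diff : ∀ μ ν, ContDiff ℝ 1 (fun x => g x μ ν))
    (hg_symm : ∀ x μ ν, g x μ ν = g x ν μ)
    (hg_inv : ∀ x μ ν, (∑ α, g x μ α * ginv x α ν) = if μ = ν then (1:ℝ) else 0)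
    (hg_inv' : ∀ x μ ν, (∑ α, ginv x μ α * g x α ν) = if μ = ν then (1:ℝ) else 0)
    (γ : Conn n)
    (hγ_cont : ∀ α μ ν, Continuous (fun x => γ x α μ ν))
    (hγ_anti : ∀ x μ ν σ, (∑ α, g x μ α * γ x α ν σ) = -(∑ α, g x ν α * γ x α μ σ))
    (b : ℝ)
    (E : Tensor2 n)
    (hE_diff : ∀ μ ν, Differentiable ℝ (fun x => E x μ ν))
    (hE_symm : ∀ x μ ν, (∑ α, E x μ α * ginv x α ν) = ∑ α, E x ν α * ginv x α μ)
    (hE_cons : ∀ (x : Pt n) (ν : Fin n), covDivDual (christoffel g ginv) E ν x = 0) :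
    ∀ (x : Pt n) (ν : Fin n),
      covDivDual (fun x α μ ν => christoffel g ginv x α μ ν + γ x α μ ν) E ν x = 0
      ∧ covDivDual (fun x α μ ν => christoffel g ginv x α μ ν + b * γ x α μ ν) E ν x = 0 := by
  intro x ν
  -- symmetry of the inverse metric
  have hginv_symm : ∀ μ ρ, ginv x μ ρ = ginv x ρ μ := by
    intro μ ρ
    have h1 : ∑ β, ∑ α, ginv x μ β * (ginv x ρ α * g x α β) = ginv x μ ρ := by
      calc ∑ β, ∑ α, ginv x μ β * (ginv x ρ α * g x α β)
          = ∑ β, ginv x μ β * ∑ α, ginv x ρ α * g x α β := by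
            simp [Finset.mul_sum]
        _ = ∑ β, ginv x μ β * (if ρ = β then (1:ℝ) else 0) := by
            refine Finset.sum_congr rfl fun β _ => ?_
            rw [hg_inv' x ρ β]
        _ = ginv x μ ρ := by simp
    have h2 : ∑ β, ∑ α, ginv x μ β * (ginv x ρ α * g x α β) = ginv x ρ μ := by
      rw [Finset.sum_comm]
      calc ∑ α, ∑ β, ginv x μ β * (ginv x ρ α * g x α β)
          = ∑ α, ginv x ρ α * ∑ β, ginv x μ β * g x β α := by
            refine Finset.sum_congr rfl fun α _ => ?_
            rw [Finset.mul_sum]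
            refine Finset.sum_congr rfl fun β _ => ?_
            rw [hg_symm x α β]; ring
        _ = ∑ α, ginv x ρ α * (if μ = α then (1:ℝ) else 0) := by
            refine Finset.sum_congr rfl fun α _ => ?_
            rw [hg_inv' x μ α]
        _ = ginv x ρ μ := by simp
    rw [← h1, h2]
  -- raised E and lowered γ
  set F : Fin n → Fin n → ℝ := fun μ β => ∑ α, E x μ α * ginv x α β with hF_def
  have hF : ∀ μ β, F μ β = F β μ := fun μ β => hE_symm x μ β
  -- First vanishing term: ∑ E^μ_α γ^α_{μν} = 0
  have hS : ∑ μ, ∑ α, E x μ α * γ x α μ ν = 0 := by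
    have hrec : ∀ μ, ∑ β, F μ β * (∑ σ, g x β σ * γ x σ μ ν)
        = ∑ α, E x μ α * γ x α μ ν := by
      intro μ
      calc ∑ β, F μ β * (∑ σ, g x β σ * γ x σ μ ν)
          = ∑ β, ∑ ρ, ∑ σ, (E x μ ρ * γ x σ μ ν) * (ginv x ρ β * g x β σ) := by
            refine Finset.sum_congr rfl fun β _ => ?_
            rw [hF_def]
            rw [Finset.sum_mul_sum]
            refine Finset.sum_congr rfl fun ρ _ => Finset.sum_congr rfl fun σ _ => ?_
            ring
        _ = ∑ ρ, ∑ σ, ∑ β, (E x μ ρ * γ x σ μ ν) * (ginv x ρ β * g x β σ) := by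
            rw [Finset.sum_comm]
            exact Finset.sum_congr rfl fun ρ _ => Finset.sum_comm
        _ = ∑ ρ, ∑ σ, (E x μ ρ * γ x σ μ ν) * (if ρ = σ then (1:ℝ) else 0) := by
            refine Finset.sum_congr rfl fun ρ _ => Finset.sum_congr rfl fun σ _ => ?_
            rw [← Finset.mul_sum, hg_inv' x ρ σ]
        _ = ∑ α, E x μ α * γ x α μ ν := by
            simp [mul_ite]
    have hzero : ∑ μ, ∑ β, F μ β * (∑ σ, g x β σ * γ x σ μ ν) = 0 := by
      refine sum_symm_antisymm_s6 F (fun β μ => ∑ σ, g x β σ * γ x σ μ ν) hF ?_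
      intro β μ
      exact hγ_anti x β μ ν
    calc ∑ μ, ∑ α, E x μ α * γ x α μ ν
        = ∑ μ, ∑ β, F μ β * (∑ σ, g x β σ * γ x σ μ ν) := by
          exact (Finset.sum_congr rfl fun μ _ => (hrec μ).symm)
      _ = 0 := hzero
  -- Second vanishing term: the trace γ^μ_{μα} = 0
  have hT : ∀ a : Fin n, ∑ μ, γ x μ μ a = 0 := by
    intro a
    have hrec : ∀ μ, ∑ ρ, ginv x μ ρ * (∑ σ, g x ρ σ * γ x σ μ a) = γ x μ μ a := by
      intro μ
      calc ∑ ρ, ginv x μ ρ * (∑ σ, g x ρ σ * γ x σ μ a)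
          = ∑ ρ, ∑ σ, γ x σ μ a * (ginv x μ ρ * g x ρ σ) := by
            refine Finset.sum_congr rfl fun ρ _ => ?_
            rw [Finset.mul_sum]
            exact Finset.sum_congr rfl fun σ _ => by ring
        _ = ∑ σ, γ x σ μ a * ∑ ρ, ginv x μ ρ * g x ρ σ := by
            rw [Finset.sum_comm]
            exact Finset.sum_congr rfl fun σ _ => by rw [Finset.mul_sum]
        _ = ∑ σ, γ x σ μ a * (if μ = σ then (1:ℝ) else 0) := by
            refine Finset.sum_congr rfl fun σ _ => ?_
            rw [hg_inv' x μ σ]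
        _ = γ x μ μ a := by simp
    have hzero : ∑ μ, ∑ ρ, (fun i j => ginv x i j) μ ρ *
        (fun ρ μ => ∑ σ, g x ρ σ * γ x σ μ a) ρ μ = 0 := by
      refine sum_symm_antisymm_s6 _ _ (fun i j => hginv_symm i j) ?_
      intro ρ μ
      exact hγ_anti x ρ μ a
    calc ∑ μ, γ x μ μ a
        = ∑ μ, ∑ ρ, ginv x μ ρ * (∑ σ, g x ρ σ * γ x σ μ a) := by
          exact Finset.sum_congr rfl fun μ _ => (hrec μ).symm
      _ = 0 := hzero
  -- Second extra term vanishes summed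
  have hT2 : ∑ μ, ∑ α, E x α ν * γ x μ μ α = 0 := by
    rw [Finset.sum_comm]
    calc ∑ α, ∑ μ, E x α ν * γ x μ μ α
        = ∑ α, E x α ν * ∑ μ, γ x μ μ α := by
          exact Finset.sum_congr rfl fun α _ => (Finset.mul_sum _ _ _).symm
      _ = 0 := by
          refine Finset.sum_eq_zero fun α _ => ?_
          rw [hT α, mul_zero]
  -- the main computation for a general coefficient c
  have main : ∀ c : ℝ,
      covDivDual (fun x α μ ν => christoffel g ginv x α μ ν + c * γ x α μ ν) E ν x = 0 := by
    intro c
    have hexp : covDivDual (fun x α μ ν => christoffel g ginv x α μ ν + c * γ x α μ ν) E ν x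
        = covDivDual (christoffel g ginv) E ν x
          - c * (∑ μ, ∑ α, E x μ α * γ x α μ ν)
          + c * (∑ μ, ∑ α, E x α ν * γ x μ μ α) := by
      have e1 : ∑ μ, ∑ α, E x μ α * (c * γ x α μ ν)
          = c * ∑ μ, ∑ α, E x μ α * γ x α μ ν := by
        rw [Finset.mul_sum]
        refine Finset.sum_congr rfl fun μ _ => ?_
        rw [Finset.mul_sum]
        exact Finset.sum_congr rfl fun α _ => by ring
      have e2 : ∑ μ, ∑ α, E x α ν * (c * γ x μ μ α)
          = c * ∑ μ, ∑ α, E x α ν * γ x μ μ α := by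
        rw [Finset.mul_sum]
        refine Finset.sum_congr rfl fun μ _ => ?_
        rw [Finset.mul_sum]
        exact Finset.sum_congr rfl fun α _ => by ring
      simp only [covDivDual, mul_add, Finset.sum_add_distrib, e1, e2]
      ring
    rw [hexp, hE_cons x ν, hS, hT2]
    ring
  refine ⟨?_, main b⟩
  have := main 1
  simpa using this
end
end

section
/- The variational identity implies the PAP differential identity: let λ_{iμ} be a continuously differentiable tetrad on ℝⁿ, b a real parameter, E^μ_ν a differentiable mixed tensor field, and define J_i^μ := −E^μ_α λ_i^α. Suppose that at every point and for every ν the identity E^μ_{ν∥⁻μ} + λ_{iμ∥⁺ν} J_i^μ = 0 holds (summation over i and μ), where E^μ_{ν∥⁻μ} := ∂_μ E^μ_ν − E^μ_α ∇^α_{μν} + E^α_ν ∇^μ_{μα} and λ_{iμ∥⁺ν} := ∂_ν λ_{iμ} − λ_{iα} ∇^α_{μν}. Then at every point and for every ν one has E^μ_{ν∥⁻μ} = (b − 1) E^{μα} γ_{μαν} (summation over μ and α), where E^{μα} = E^μ_β g^{βα} and γ_{μαν} = g_{μβ} γ^β_{αν}. -/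
/-!
Contracting the tetrad derivative `λ_{iμ∥⁺ν} = ∂_ν λ_{iμ} − λ_{iα} ∇^α_{μν}` with
`J_i^μ = −E^μ_β λ_i^β` turns `∂_ν λ_{iμ}` into the Weitzenböck connection, because `λ_i^β` is
dual to `λ_{iα}`. Since `∇ − Γ = (b − 1) γ`, the variational identity therefore reads
`E^μ_{ν∥⁻μ} = −E^μ_α (∇ − Γ)^α_{μν} = (1 − b) E^μ_α γ^α_{μν}`. Both the Weitzenböck and the
Levi-Civita connection are compatible with `g`, so the lowered contortion `γ_{σμν}` is
antisymmetric in `σ, μ`; raising and lowering indices then gives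
`E^{μα} γ_{μαν} = −E^μ_α γ^α_{μν}`.
-/

open scoped BigOperators

noncomputable section

/-- The metric `g_{μν} = λ_{iμ} λ_{iν}` associated with a tetrad `lam x i μ = λ_{iμ}`. -/
noncomputable def tetMetric {n : ℕ} (lam : Pt n → Fin n → Fin n → ℝ) : Tensor2 n :=
  fun x μ ν => ∑ i, lam x i μ * lam x i ν

/-- The inverse metric `g^{μν} = λ_i^μ λ_i^ν` built from the inverse tetrad `laminv x i μ = λ_i^μ`. -/
noncomputable def tetMetricInv {n : ℕ} (laminv : Pt n → Fin n → Fin n → ℝ) : Tensor2 n :=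
  fun x μ ν => ∑ i, laminv x i μ * laminv x i ν

/-- The Weitzenböck connection `Γ^α_{μν} = λ_i^α ∂_ν λ_{iμ}`. -/
noncomputable def weitzenbock {n : ℕ} (lam laminv : Pt n → Fin n → Fin n → ℝ) : Conn n :=
  fun x α μ ν => ∑ i, laminv x i α * pd (fun y => lam y i μ) ν x

/-- The contortion `γ^α_{μν} = Γ^α_{μν} − {^α_{μν}}`. -/
noncomputable def contortion {n : ℕ} (lam laminv : Pt n → Fin n → Fin n → ℝ) : Conn n :=
  fun x α μ ν => weitzenbock lam laminv x α μ ν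
    - christoffel (tetMetric lam) (tetMetricInv laminv) x α μ ν


open Finset

theorem sum_mul_sum_eq_of_dual {ι κ R : Type*} [CommSemiring R] [Fintype ι] [Fintype κ]
    [DecidableEq κ] {A B : ι → κ → R}
    (h : ∀ k l, ∑ i, A i k * B i l = if k = l then 1 else 0) (u v : κ → R) :
    ∑ i, (∑ k, A i k * u k) * (∑ l, B i l * v l) = ∑ k, u k * v k := by
  calc ∑ i, (∑ k, A i k * u k) * (∑ l, B i l * v l)
      = ∑ k, ∑ l, u k * v l * ∑ i, A i k * B i l := by
        simp_rw [Finset.sum_mul_sum, Finset.mul_sum]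
        rw [sum_comm]; refine sum_congr rfl fun k _ => ?_
        rw [sum_comm]; exact sum_congr rfl fun l _ => sum_congr rfl fun i _ => by ring
    _ = ∑ k, u k * v k := by simp [h]

section PartialDerivative

variable {n : ℕ} {x : Pt n}

theorem pd_fun_mul {f g : Pt n → ℝ} (hf : DifferentiableAt ℝ f x) (hg : DifferentiableAt ℝ g x)
    (μ : Fin n) : pd (fun y => f y * g y) μ x = pd f μ x * g x + f x * pd g μ x := by
  simp only [pd, fderiv_fun_mul hf hg, add_apply, smul_apply, smul_eq_mul]
  ring

theorem pd_fun_sum {ι : Type*} (s : Finset ι) {f : ι → Pt n → ℝ}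
    (hf : ∀ i ∈ s, DifferentiableAt ℝ (f i) x) (μ : Fin n) :
    pd (fun y => ∑ i ∈ s, f i y) μ x = ∑ i ∈ s, pd (f i) μ x := by
  simp [pd, fderiv_fun_sum hf]

end PartialDerivative

def lowerConn {n : ℕ} (g : Tensor2 n) (N : Conn n) : Conn n :=
  fun x σ μ ν => ∑ α, g x σ α * N x α μ ν

section LeviCivita

variable {n : ℕ} {g ginv : Tensor2 n} {x : Pt n}

theorem lowerConn_christoffel
    (hinv : ∀ μ ν, ∑ β, g x μ β * ginv x β ν = if μ = ν then 1 else 0) (σ μ ν : Fin n) :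
    lowerConn g (christoffel g ginv) x σ μ ν
      = (pd (fun y => g y μ σ) ν x + pd (fun y => g y ν σ) μ x - pd (fun y => g y μ ν) σ x) / 2 := by
  set A : Fin n → ℝ := fun τ => pd (fun y => g y μ τ) ν x + pd (fun y => g y ν τ) μ x
    - pd (fun y => g y μ ν) τ x
  calc lowerConn g (christoffel g ginv) x σ μ ν
      = ∑ τ, (∑ α, g x σ α * ginv x α τ) * (A τ / 2) := by
        simp only [lowerConn, christoffel, mul_sum, sum_mul]
        rw [sum_comm]
        exact sum_congr rfl fun τ _ => sum_congr rfl fun α _ => by ring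
    _ = A σ / 2 := by simp [hinv]

theorem lowerConn_christoffel_add_swap (hsymm : ∀ y μ ν, g y μ ν = g y ν μ)
    (hinv : ∀ μ ν, ∑ β, g x μ β * ginv x β ν = if μ = ν then 1 else 0) (σ μ ν : Fin n) :
    lowerConn g (christoffel g ginv) x σ μ ν + lowerConn g (christoffel g ginv) x μ σ ν
      = pd (fun y => g y σ μ) ν x := by
  have pd_swap : ∀ a b c, pd (fun y => g y a b) c x = pd (fun y => g y b a) c x :=
    fun a b c => by simp only [hsymm _ a b]
  rw [lowerConn_christoffel hinv, lowerConn_christoffel hinv, pd_swap μ σ ν, pd_swap σ ν μ,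
    pd_swap ν μ σ]
  ring

end LeviCivita

theorem tetMetric_symm {n : ℕ} (lam : Pt n → Fin n → Fin n → ℝ) (y : Pt n) (μ ν : Fin n) :
    tetMetric lam y μ ν = tetMetric lam y ν μ :=
  sum_congr rfl fun _ _ => mul_comm _ _

theorem tetMetricInv_symm {n : ℕ} (laminv : Pt n → Fin n → Fin n → ℝ) (y : Pt n) (μ ν : Fin n) :
    tetMetricInv laminv y μ ν = tetMetricInv laminv y ν μ :=
  sum_congr rfl fun _ _ => mul_comm _ _

section Tetrad

variable {n : ℕ} {lam laminv : Pt n → Fin n → Fin n → ℝ} {x : Pt n}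

theorem tetMetric_mul_tetMetricInv
    (hinv : ∀ μ ν, ∑ i, lam x i μ * laminv x i ν = if μ = ν then 1 else 0)
    (hinv' : ∀ i j, ∑ μ, lam x i μ * laminv x j μ = if i = j then 1 else 0) (μ ν : Fin n) :
    ∑ β, tetMetric lam x μ β * tetMetricInv laminv x β ν = if μ = ν then 1 else 0 := by
  rw [← hinv, ← sum_mul_sum_eq_of_dual (A := fun β i => lam x i β)
    (B := fun β j => laminv x j β) hinv' (fun i => lam x i μ)]
  simp only [tetMetric, tetMetricInv, mul_comm (lam x _ μ)]

theorem tetMetricInv_mul_tetMetric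
    (hinv : ∀ μ ν, ∑ i, lam x i μ * laminv x i ν = if μ = ν then 1 else 0)
    (hinv' : ∀ i j, ∑ μ, lam x i μ * laminv x j μ = if i = j then 1 else 0) (μ ν : Fin n) :
    ∑ β, tetMetricInv laminv x μ β * tetMetric lam x β ν = if μ = ν then 1 else 0 := by
  simp_rw [tetMetricInv_symm laminv x μ, tetMetric_symm lam x _ ν, mul_comm (tetMetricInv _ _ _ _),
    tetMetric_mul_tetMetricInv hinv hinv', eq_comm]

theorem pd_tetMetric (hdiff : ∀ i μ, DifferentiableAt ℝ (fun y => lam y i μ) x) (μ σ ν : Fin n) :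
    pd (fun y => tetMetric lam y μ σ) ν x
      = ∑ i, (pd (fun y => lam y i μ) ν x * lam x i σ + lam x i μ * pd (fun y => lam y i σ) ν x) := by
  simp only [tetMetric]
  rw [pd_fun_sum (f := fun i y => lam y i μ * lam y i σ) _ fun i _ => (hdiff i μ).mul (hdiff i σ)]
  exact sum_congr rfl fun i _ => pd_fun_mul (hdiff i μ) (hdiff i σ) ν

theorem lowerConn_weitzenbock
    (hinv' : ∀ i j, ∑ μ, lam x i μ * laminv x j μ = if i = j then 1 else 0) (σ μ ν : Fin n) :
    lowerConn (tetMetric lam) (weitzenbock lam laminv) x σ μ ν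
      = ∑ i, lam x i σ * pd (fun y => lam y i μ) ν x := by
  rw [← sum_mul_sum_eq_of_dual (A := fun α i => lam x i α) (B := fun α j => laminv x j α) hinv']
  simp only [lowerConn, tetMetric, weitzenbock, mul_comm (lam x _ σ)]

theorem lowerConn_weitzenbock_add_swap
    (hinv' : ∀ i j, ∑ μ, lam x i μ * laminv x j μ = if i = j then 1 else 0)
    (hdiff : ∀ i μ, DifferentiableAt ℝ (fun y => lam y i μ) x) (σ μ ν : Fin n) :
    lowerConn (tetMetric lam) (weitzenbock lam laminv) x σ μ ν
        + lowerConn (tetMetric lam) (weitzenbock lam laminv) x μ σ ν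
      = pd (fun y => tetMetric lam y σ μ) ν x := by
  rw [lowerConn_weitzenbock hinv', lowerConn_weitzenbock hinv', pd_tetMetric hdiff,
    ← sum_add_distrib]
  exact sum_congr rfl fun i _ => by ring

theorem lowerConn_contortion_add_swap
    (hinv : ∀ μ ν, ∑ i, lam x i μ * laminv x i ν = if μ = ν then 1 else 0)
    (hinv' : ∀ i j, ∑ μ, lam x i μ * laminv x j μ = if i = j then 1 else 0)
    (hdiff : ∀ i μ, DifferentiableAt ℝ (fun y => lam y i μ) x) (σ μ ν : Fin n) :
    lowerConn (tetMetric lam) (contortion lam laminv) x σ μ ν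
        + lowerConn (tetMetric lam) (contortion lam laminv) x μ σ ν = 0 := by
  have lower_sub : ∀ a b, lowerConn (tetMetric lam) (contortion lam laminv) x a b ν
      = lowerConn (tetMetric lam) (weitzenbock lam laminv) x a b ν
        - lowerConn (tetMetric lam) (christoffel (tetMetric lam) (tetMetricInv laminv)) x a b ν :=
    fun a b => by simp only [lowerConn, contortion, mul_sub, sum_sub_distrib]
  rw [lower_sub, lower_sub]
  linear_combination lowerConn_weitzenbock_add_swap hinv' hdiff σ μ ν
    - lowerConn_christoffel_add_swap (tetMetric_symm lam) (tetMetric_mul_tetMetricInv hinv hinv')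
      σ μ ν

theorem sum_tetMetricInv_mul_lowerConn_contortion
    (hinv : ∀ μ ν, ∑ i, lam x i μ * laminv x i ν = if μ = ν then 1 else 0)
    (hinv' : ∀ i j, ∑ μ, lam x i μ * laminv x j μ = if i = j then 1 else 0)
    (hdiff : ∀ i μ, DifferentiableAt ℝ (fun y => lam y i μ) x) (β μ ν : Fin n) :
    ∑ α, tetMetricInv laminv x β α * lowerConn (tetMetric lam) (contortion lam laminv) x μ α ν
      = -contortion lam laminv x β μ ν := by
  have antisymm : ∀ α, lowerConn (tetMetric lam) (contortion lam laminv) x μ α ν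
      = -lowerConn (tetMetric lam) (contortion lam laminv) x α μ ν := fun α =>
    eq_neg_of_add_eq_zero_left (lowerConn_contortion_add_swap hinv hinv' hdiff μ α ν)
  calc ∑ α, tetMetricInv laminv x β α * lowerConn (tetMetric lam) (contortion lam laminv) x μ α ν
      = -∑ γ, (∑ α, tetMetricInv laminv x β α * tetMetric lam x α γ) * contortion lam laminv x γ μ ν := by
        simp only [antisymm]
        simp only [lowerConn, mul_neg, sum_neg_distrib, mul_sum, sum_mul, mul_assoc]
        rw [sum_comm]
    _ = -contortion lam laminv x β μ ν := by simp [tetMetricInv_mul_tetMetric hinv hinv']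

theorem sum_raised_mul_lowered_contortion
    (hinv : ∀ μ ν, ∑ i, lam x i μ * laminv x i ν = if μ = ν then 1 else 0)
    (hinv' : ∀ i j, ∑ μ, lam x i μ * laminv x j μ = if i = j then 1 else 0)
    (hdiff : ∀ i μ, DifferentiableAt ℝ (fun y => lam y i μ) x) (E : Tensor2 n) (ν : Fin n) :
    ∑ μ, ∑ α, (∑ β, E x μ β * tetMetricInv laminv x β α)
        * (∑ β, tetMetric lam x μ β * contortion lam laminv x β α ν)
      = -∑ μ, ∑ α, E x μ α * contortion lam laminv x α μ ν := by
  rw [← sum_neg_distrib]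
  refine sum_congr rfl fun μ _ => ?_
  change ∑ α, (∑ β, E x μ β * tetMetricInv laminv x β α)
      * lowerConn (tetMetric lam) (contortion lam laminv) x μ α ν = _
  simp only [sum_mul, mul_assoc]
  rw [sum_comm]
  simp only [← mul_sum, sum_tetMetricInv_mul_lowerConn_contortion hinv hinv' hdiff, mul_neg,
    sum_neg_distrib]

theorem sum_tetradCovDeriv_mul_current
    (hinv : ∀ μ ν, ∑ i, lam x i μ * laminv x i ν = if μ = ν then 1 else 0)
    (N : Conn n) (E : Tensor2 n) (ν : Fin n) :
    ∑ i, ∑ μ, (pd (fun y => lam y i μ) ν x - ∑ α, lam x i α * N x α μ ν)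
        * (-(∑ α, E x μ α * laminv x i α))
      = ∑ μ, ∑ α, E x μ α * (N x α μ ν - weitzenbock lam laminv x α μ ν) := by
  rw [sum_comm]
  refine sum_congr rfl fun μ _ => ?_
  have contract_conn : ∑ i, (∑ α, lam x i α * N x α μ ν) * (∑ β, laminv x i β * E x μ β)
      = ∑ α, N x α μ ν * E x μ α :=
    sum_mul_sum_eq_of_dual hinv _ _
  have contract_deriv : ∑ i, pd (fun y => lam y i μ) ν x * (∑ β, E x μ β * laminv x i β)
      = ∑ β, E x μ β * weitzenbock lam laminv x β μ ν := by
    simp only [weitzenbock, mul_sum]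
    rw [sum_comm]
    exact sum_congr rfl fun β _ => sum_congr rfl fun i _ => by ring
  calc ∑ i, (pd (fun y => lam y i μ) ν x - ∑ α, lam x i α * N x α μ ν)
        * (-(∑ α, E x μ α * laminv x i α))
      = ∑ i, (∑ α, lam x i α * N x α μ ν) * (∑ β, laminv x i β * E x μ β)
        - ∑ i, pd (fun y => lam y i μ) ν x * (∑ β, E x μ β * laminv x i β) := by
        simp only [← sum_sub_distrib, mul_comm (laminv x _ _)]
        exact sum_congr rfl fun i _ => by ring
    _ = ∑ α, E x μ α * (N x α μ ν - weitzenbock lam laminv x α μ ν) := by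
        rw [contract_conn, contract_deriv, ← sum_sub_distrib]
        exact sum_congr rfl fun α _ => by ring

theorem sum_paramCovDeriv_mul_current
    (hinv : ∀ μ ν, ∑ i, lam x i μ * laminv x i ν = if μ = ν then 1 else 0)
    (b : ℝ) (E : Tensor2 n) (ν : Fin n) :
    ∑ i, ∑ μ, (pd (fun y => lam y i μ) ν x
          - ∑ α, lam x i α * (christoffel (tetMetric lam) (tetMetricInv laminv) x α μ ν
            + b * contortion lam laminv x α μ ν))
        * (-(∑ α, E x μ α * laminv x i α))
      = (b - 1) * ∑ μ, ∑ α, E x μ α * contortion lam laminv x α μ ν := by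
  rw [sum_tetradCovDeriv_mul_current hinv (fun x α μ ν =>
    christoffel (tetMetric lam) (tetMetricInv laminv) x α μ ν + b * contortion lam laminv x α μ ν)]
  simp only [mul_sum]
  exact sum_congr rfl fun μ _ => sum_congr rfl fun α _ => by simp only [contortion]; ring

end Tetrad

theorem stmt15_general {n : ℕ}
    (lam laminv : Pt n → Fin n → Fin n → ℝ)
    (hlam_diff : ∀ i μ, ContDiff ℝ 1 (fun x => lam x i μ))
    (hlam_inv : ∀ x μ ν, (∑ i, lam x i μ * laminv x i ν) = if μ = ν then (1:ℝ) else 0)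
    (hlam_inv' : ∀ x i j, (∑ μ, lam x i μ * laminv x j μ) = if i = j then (1:ℝ) else 0)
    (b : ℝ)
    (E : Tensor2 n)
    (hvar : ∀ (x : Pt n) (ν : Fin n),
      covDivDual (fun x α μ ν =>
          christoffel (tetMetric lam) (tetMetricInv laminv) x α μ ν
            + b * contortion lam laminv x α μ ν) E ν x
        + (∑ i, ∑ μ,
            (pd (fun y => lam y i μ) ν x
              - ∑ α, lam x i α *
                  (christoffel (tetMetric lam) (tetMetricInv laminv) x α μ ν
                    + b * contortion lam laminv x α μ ν))
            * (-(∑ α, E x μ α * laminv x i α))) = 0)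
 :
    ∀ (x : Pt n) (ν : Fin n),
      covDivDual (fun x α μ ν =>
          christoffel (tetMetric lam) (tetMetricInv laminv) x α μ ν
            + b * contortion lam laminv x α μ ν) E ν x
        = (b - 1) *
            (∑ μ, ∑ α, (∑ β, E x μ β * tetMetricInv laminv x β α)
              * (∑ β, tetMetric lam x μ β * contortion lam laminv x β α ν)) := by
  intro x ν
  have hdiff : ∀ i μ, DifferentiableAt ℝ (fun y => lam y i μ) x :=
    fun i μ => (hlam_diff i μ).differentiable one_ne_zero x
  have hv := hvar x ν
  rw [sum_paramCovDeriv_mul_current (hlam_inv x)] at hv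
  rw [sum_raised_mul_lowered_contortion (hlam_inv x) (hlam_inv' x) hdiff]
  linear_combination hv

/-- the variational identity `E^μ_{ν∥⁻μ} + λ_{iμ∥⁺ν} J_i^μ = 0` with
`J_i^μ = −E^μ_α λ_i^α` implies the PAP differential identity
`E^μ_{ν∥⁻μ} = (b − 1) E^{μα} γ_{μαν}`. -/
theorem stmt15 {n : ℕ} (hn : 1 ≤ n)
    (lam laminv : Pt n → Fin n → Fin n → ℝ)
    (hlam_diff : ∀ i μ, ContDiff ℝ 1 (fun x => lam x i μ))
    (hlam_inv : ∀ x μ ν, (∑ i, lam x i μ * laminv x i ν) = if μ = ν then (1:ℝ) else 0)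
    (hlam_inv' : ∀ x i j, (∑ μ, lam x i μ * laminv x j μ) = if i = j then (1:ℝ) else 0)
    (b : ℝ)
    (E : Tensor2 n)
    (hE_diff : ∀ μ ν, Differentiable ℝ (fun x => E x μ ν))
    (hvar : ∀ (x : Pt n) (ν : Fin n),
      covDivDual (fun x α μ ν =>
          christoffel (tetMetric lam) (tetMetricInv laminv) x α μ ν
            + b * contortion lam laminv x α μ ν) E ν x
        + (∑ i, ∑ μ,
            (pd (fun y => lam y i μ) ν x
              - ∑ α, lam x i α *
                  (christoffel (tetMetric lam) (tetMetricInv laminv) x α μ ν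
                    + b * contortion lam laminv x α μ ν))
            * (-(∑ α, E x μ α * laminv x i α))) = 0)
 :
    ∀ (x : Pt n) (ν : Fin n),
      covDivDual (fun x α μ ν =>
          christoffel (tetMetric lam) (tetMetricInv laminv) x α μ ν
            + b * contortion lam laminv x α μ ν) E ν x
        = (b - 1) *
            (∑ μ, ∑ α, (∑ β, E x μ β * tetMetricInv laminv x β α)
              * (∑ β, tetMetric lam x μ β * contortion lam laminv x β α ν)) :=
  stmt15_general lam laminv hlam_diff hlam_inv hlam_inv' b E hvar
end
end
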